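/- Let a > 0, M > 0, and η > 0. There exist constants C, η₁, η₂ > 0 such that for all y ≤ 0 and all t > 0: errfn( (−y − at)/(M√t) ) · e^{−η|y|} ≤ C e^{−η₁|y|} · e^{−η₂ t}. -/

import Mathlib

open MeasureTheory Set

noncomputable def errfn (z : ℝ) : ℝ :=
  (1 / (2 * Real.pi)) * ∫ ξ in Set.Iic z, Real.exp (-ξ^2)

/-!
Write `z = (|y| - a t) / (M √t)`. If `|y| ≤ a t / 2`, then `z ≤ -a √t / (2M)`, and the Gaussian
tail bound `errfn z ≤ exp (-z² / 2)` gives decay `exp (-a² t / (8M²))` in `t`, while half of the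
weight `exp (-η |y|)` is simply kept. If `|y| > a t / 2`, then `errfn z ≤ 1` and the weight splits
as `exp (-η |y| / 2) · exp (-η |y| / 2) ≤ exp (-η |y| / 2) · exp (-η a t / 4)`.
-/

open Real Filter

lemma setIntegral_exp_neg_mul_sq_le {b : ℝ} (hb : 0 < b) (s : Set ℝ) :
    ∫ ξ in s, exp (-b * ξ ^ 2) ≤ √(π / b) :=
  integral_gaussian b ▸ setIntegral_le_integral (integrable_exp_neg_mul_sq hb)
    (Eventually.of_forall fun _ => (exp_pos _).le)

lemma sqrt_le_two_mul_pi {x : ℝ} (hx : x ≤ 2 * π) : √x ≤ 2 * π :=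
  (sqrt_le_left (by positivity)).2 (by nlinarith [pi_gt_three])

lemma errfn_le_one (z : ℝ) : errfn z ≤ 1 := by
  have hint := setIntegral_exp_neg_mul_sq_le one_pos (Iic z)
  simp only [neg_mul, one_mul, div_one] at hint
  have hπ := sqrt_le_two_mul_pi (x := π) (by linarith [pi_pos])
  rw [errfn, one_div, inv_mul_le_iff₀ (by positivity)]
  linarith

lemma errfn_le_exp_neg_sq_div_two {z w : ℝ} (hw : 0 ≤ w) (hz : z ≤ -w) :
    errfn z ≤ exp (-w ^ 2 / 2) := by
  have hpointwise : ∀ ξ ∈ Iic z, exp (-ξ ^ 2) ≤ exp (-w ^ 2 / 2) * exp (-(1 / 2) * ξ ^ 2) := by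
    intro ξ hξ
    rw [← exp_add, exp_le_exp]
    nlinarith [mul_nonneg (by linarith [mem_Iic.1 hξ] : 0 ≤ w - ξ)
      (by linarith [mem_Iic.1 hξ] : 0 ≤ -w - ξ)]
  have hint : ∫ ξ in Iic z, exp (-ξ ^ 2) ≤ exp (-w ^ 2 / 2) * √(2 * π) :=
    calc ∫ ξ in Iic z, exp (-ξ ^ 2)
        ≤ ∫ ξ in Iic z, exp (-w ^ 2 / 2) * exp (-(1 / 2) * ξ ^ 2) :=
          setIntegral_mono_on (by simpa using (integrable_exp_neg_mul_sq one_pos).integrableOn)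
            ((integrable_exp_neg_mul_sq one_half_pos).const_mul _).integrableOn
            measurableSet_Iic hpointwise
      _ = exp (-w ^ 2 / 2) * ∫ ξ in Iic z, exp (-(1 / 2) * ξ ^ 2) := integral_const_mul _ _
      _ ≤ exp (-w ^ 2 / 2) * √(π / (1 / 2)) := by
          gcongr; exact setIntegral_exp_neg_mul_sq_le one_half_pos _
      _ = exp (-w ^ 2 / 2) * √(2 * π) := by rw [div_div_eq_mul_div, div_one, mul_comm π]
  have h2π := sqrt_le_two_mul_pi (le_refl (2 * π))
  rw [errfn, one_div, inv_mul_le_iff₀ (by positivity)]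
  nlinarith [exp_pos (-w ^ 2 / 2)]

lemma errfn_drift_le_exp {a M t x : ℝ} (ha : 0 ≤ a) (hM : 0 < M) (ht : 0 < t)
    (hx : x ≤ a * t / 2) :
    errfn ((x - a * t) / (M * √t)) ≤ exp (-(a ^ 2 / (8 * M ^ 2)) * t) := by
  have hsqrt : √t * √t = t := mul_self_sqrt ht.le
  have hz : (x - a * t) / (M * √t) ≤ -(a * √t / (2 * M)) := by
    rw [div_le_iff₀ (by positivity)]
    field_simp
    nlinarith
  convert errfn_le_exp_neg_sq_div_two (by positivity) hz using 2
  field_simp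
  rw [sq_sqrt ht.le]
  ring

theorem errfn_localized_decay (a M η : ℝ)
    (ha : 0 < a) (hM : 0 < M) (hη : 0 < η) :
    ∃ C > 0, ∃ η₁ > 0, ∃ η₂ > 0, ∀ y : ℝ, y ≤ 0 → ∀ t : ℝ, 0 < t →
      errfn ((-y - a*t) / (M * Real.sqrt t)) * Real.exp (-η * |y|) ≤
        C * Real.exp (-η₁ * |y|) * Real.exp (-η₂ * t) := by
  set η₂ := min (a ^ 2 / (8 * M ^ 2)) (η * a / 4)
  refine ⟨1, one_pos, η / 2, by positivity, η₂, by positivity, fun y hy t ht => ?_⟩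
  rw [← abs_of_nonpos hy, one_mul]
  have hη₂_le_gauss : η₂ * t ≤ a ^ 2 / (8 * M ^ 2) * t := by gcongr; exact min_le_left _ _
  have hη₂_le_drift : η₂ * t ≤ η * a / 4 * t := by gcongr; exact min_le_right _ _
  rcases le_or_gt |y| (a * t / 2) with hsmall | hlarge
  · calc errfn ((|y| - a * t) / (M * √t)) * exp (-η * |y|)
        ≤ exp (-η₂ * t) * exp (-(η / 2) * |y|) := by
          gcongr
          · exact (errfn_drift_le_exp ha.le hM ht hsmall).trans (exp_le_exp.2 (by linarith))
          · nlinarith [abs_nonneg y]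
      _ = exp (-(η / 2) * |y|) * exp (-η₂ * t) := mul_comm _ _
  · calc errfn ((|y| - a * t) / (M * √t)) * exp (-η * |y|)
        ≤ 1 * exp (-η * |y|) := by gcongr; exact errfn_le_one _
      _ ≤ exp (-(η / 2) * |y|) * exp (-η₂ * t) := by
          rw [one_mul, ← exp_add, exp_le_exp]
          nlinarith
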